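/- If N is a minor of a non-regular matroid M obtained by deleting and contracting only elements outside a set R of regular elements of M, and N is non-regular, then every element of R is a regular element of N. In particular, R(M) ⊆ R(N) for such minors N. -/

import Mathlib

open Matroid Set

variable {α β : Type*}

/-- Deletion of a set of elements. -/
def Matroid.del (M : Matroid α) (D : Set α) : Matroid α := M ↾ (M.E \ D)

/-- Contraction of a set of elements. -/
def Matroid.con (M : Matroid α) (C : Set α) : Matroid α := (M✶.del C)✶

/-- The rank of a set: the supremum of cardinalities of independent subsets. -/
noncomputable def Matroid.rnk (M : Matroid α) (X : Set α) : ℕ :=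
  sSup (Set.ncard '' {I | M.Indep I ∧ I ⊆ X})

/-- The connectivity function λ(X) = r(X) + r(E − X) − r(M). -/
noncomputable def Matroid.lam (M : Matroid α) (X : Set α) : ℤ :=
  (M.rnk X : ℤ) + (M.rnk (M.E \ X) : ℤ) - (M.rnk M.E : ℤ)

/-- A circuit: a minimal dependent set. -/
def Matroid.IsCircuit' (M : Matroid α) (C : Set α) : Prop :=
  M.Dep C ∧ ∀ D : Set α, D ⊂ C → M.Indep D

/-- A cycle of a (binary) matroid: a disjoint union of circuits. -/
def Matroid.IsCycle (M : Matroid α) (C : Set α) : Prop :=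
  ∃ S : Set (Set α), (∀ c ∈ S, M.IsCircuit' c) ∧ S.PairwiseDisjoint id ∧ C = ⋃₀ S

/-- `M` is representable over the field `𝔽`. -/
def Matroid.IsRepBy (M : Matroid α) (𝔽 : Type) [Field 𝔽] : Prop :=
  ∃ (n : ℕ) (φ : α → (Fin n → 𝔽)), ∀ I : Set α,
    M.Indep I ↔ I ⊆ M.E ∧ LinearIndependent 𝔽 (fun x : I => φ x)

/-- A regular matroid: one representable over every field. -/
def Matroid.IsRegular (M : Matroid α) : Prop :=
  ∀ (𝔽 : Type) [Field 𝔽], M.IsRepBy 𝔽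

/-- A binary matroid: one representable over GF(2). -/
def Matroid.IsBinary (M : Matroid α) : Prop := M.IsRepBy (ZMod 2)

/-- A regular element: one whose deletion and contraction are both regular. -/
def Matroid.IsRegularElem (M : Matroid α) (e : α) : Prop :=
  (M.del {e}).IsRegular ∧ (M.con {e}).IsRegular

/-- An exact j-separation `(X₁, X₂)` of `M`. -/
def Matroid.ExactSep (M : Matroid α) (j : ℕ) (X₁ X₂ : Set α) : Prop :=
  Disjoint X₁ X₂ ∧ X₁ ∪ X₂ = M.E ∧ (j : ℤ) ≤ X₁.ncard ∧ (j : ℤ) ≤ X₂.ncard ∧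
    M.lam X₁ = (j : ℤ) - 1

/-- A j-separation `(X₁, X₂)` of `M`. -/
def Matroid.IsSep (M : Matroid α) (j : ℕ) (X₁ X₂ : Set α) : Prop :=
  Disjoint X₁ X₂ ∧ X₁ ∪ X₂ = M.E ∧ (j : ℤ) ≤ X₁.ncard ∧ (j : ℤ) ≤ X₂.ncard ∧
    M.lam X₁ ≤ (j : ℤ) - 1

/-- A k-connected matroid: no j-separation for j ≤ k − 1. -/
def Matroid.KConnected (M : Matroid α) (k : ℕ) : Prop :=
  ∀ j : ℕ, 1 ≤ j → j ≤ k - 1 → ∀ X₁ X₂ : Set α, ¬ M.IsSep j X₁ X₂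

/-- Matroid isomorphism: a bijection of ground sets preserving independence. -/
def Matroid.MIso (M : Matroid α) (N : Matroid β) : Prop :=
  ∃ e : ↥M.E ≃ ↥N.E, ∀ I : Set ↥M.E,
    M.Indep (Subtype.val '' I) ↔ N.Indep (Subtype.val '' (e '' I))

/-! Regularity is minor-closed, so a regular element stays regular in every minor avoiding it:
its deletion and contraction in `M ＼ X ／ Y` are the minors `M ＼ {e} ＼ X ／ Y` and
`M ／ {e} ＼ X ／ Y`. Contraction of `C` is represented by composing with the quotient by the
span of a basis of `C`. -/

namespace Matroid

variable {M : Matroid α} {𝔽 : Type} [Field 𝔽]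

lemma del_eq_delete (M : Matroid α) (D : Set α) : M.del D = M ＼ D := rfl

lemma con_eq_contract (M : Matroid α) (C : Set α) : M.con C = M ／ C := rfl

lemma isRepBy_of_finiteDimensional {V : Type*} [AddCommGroup V] [Module 𝔽 V]
    [FiniteDimensional 𝔽 V] (φ : α → V) (hφ : ∀ I, M.Indep I ↔ I ⊆ M.E ∧ LinearIndepOn 𝔽 φ I) :
    M.IsRepBy 𝔽 := by
  let b := Module.finBasis 𝔽 V
  refine ⟨_, b.equivFun ∘ φ, fun I => ?_⟩
  rw [hφ, ← b.equivFun.toLinearMap.linearIndepOn_iff_of_injOn b.equivFun.injective.injOn]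
  rfl

lemma IsRepBy.delete (h : M.IsRepBy 𝔽) (D : Set α) : (M ＼ D).IsRepBy 𝔽 := by
  obtain ⟨n, φ, hφ⟩ := h
  refine ⟨n, φ, fun I => ?_⟩
  rw [delete_indep_iff, hφ, delete_ground, subset_sdiff]
  tauto

lemma IsRepBy.contract (h : M.IsRepBy 𝔽) (C : Set α) : (M ／ C).IsRepBy 𝔽 := by
  obtain ⟨n, φ, hφ⟩ := h
  obtain ⟨I₀, hI₀⟩ := M.exists_isBasis' C
  have hI₀φ : LinearIndepOn 𝔽 φ I₀ := ((hφ I₀).1 hI₀.indep).2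
  refine isRepBy_of_finiteDimensional (Submodule.mkQ (Submodule.span 𝔽 (φ '' I₀)) ∘ φ)
    fun J => ?_
  rw [hI₀.contract_indep_iff, hφ, contract_ground, subset_sdiff, union_subset_iff, union_comm]
  constructor
  · rintro ⟨⟨⟨hJE, -⟩, hli⟩, hCJ⟩
    exact ⟨⟨hJE, hCJ.symm⟩, (hI₀φ.quotient_iff_union (hCJ.mono_left hI₀.subset)).2 hli⟩
  · rintro ⟨⟨hJE, hJC⟩, hli⟩
    have hI₀J : Disjoint I₀ J := hJC.symm.mono_left hI₀.subset
    exact ⟨⟨⟨hJE, hI₀.indep.subset_ground⟩, (hI₀φ.quotient_iff_union hI₀J).1 hli⟩, hJC.symm⟩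

lemma IsRegular.delete (h : M.IsRegular) (D : Set α) : (M ＼ D).IsRegular :=
  fun 𝔽 _ => (h 𝔽).delete D

lemma IsRegular.contract (h : M.IsRegular) (C : Set α) : (M ／ C).IsRegular :=
  fun 𝔽 _ => (h 𝔽).contract C

lemma IsRegularElem.delete_contract {e : α} {X Y : Set α} (h : M.IsRegularElem e)
    (heX : e ∉ X) (heY : e ∉ Y) : (M ＼ X ／ Y).IsRegularElem e := by
  obtain ⟨hdel, hcon⟩ := h
  simp only [IsRegularElem, del_eq_delete, con_eq_contract] at hdel hcon ⊢
  constructor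
  · rw [contract_delete_comm _ (disjoint_singleton_right.2 heY), delete_comm]
    exact (hdel.delete X).contract Y
  · rw [contract_comm, ← contract_delete_comm _ (disjoint_singleton_left.2 heX)]
    exact (hcon.delete X).contract Y

end Matroid

theorem regularElems_of_minor_general (M : Matroid α)
    (R X Y : Set α) (hR : ∀ r ∈ R, M.IsRegularElem r)
    (hXR : Disjoint X R) (hYR : Disjoint Y R) :
    ∀ r ∈ R, ((M.del X).con Y).IsRegularElem r :=
  fun r hr => (hR r hr).delete_contract (hXR.notMem_of_mem_right hr) (hYR.notMem_of_mem_right hr)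

/-- a non-regular minor obtained by deleting and contracting only
elements outside a set R of regular elements keeps every element of R regular. -/
theorem regularElems_of_minor (M : Matroid α) (hM : ¬ M.IsRegular)
    (R X Y : Set α) (hR : ∀ r ∈ R, M.IsRegularElem r)
    (hXY : Disjoint X Y) (hXR : Disjoint X R) (hYR : Disjoint Y R)
    (hXE : X ⊆ M.E) (hYE : Y ⊆ M.E)
    (hN : ¬ ((M.del X).con Y).IsRegular) :
    ∀ r ∈ R, ((M.del X).con Y).IsRegularElem r :=
  regularElems_of_minor_general M R X Y hR hXR hYR
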